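/- arXiv:1701.08930 — 3 statements merged into one kernel-verified Lean document; each statement's English description precedes it below -/
import Mathlib

section
/- The set Z = {(θ,φ,ψ,0,0) : θ,φ,ψ ∈ ℝ} is contained in the center of G_NC, and if α ≠ 0, β ≠ 0, γ ≠ 0 then Z equals the center of G_NC. -/
/-- An element (θ,φ,ψ,q₁,q₂,p₁,p₂) of ℝ⁷. -/
@[ext]
structure GNC where
  θ : ℝ
  φ : ℝ
  ψ : ℝ
  q1 : ℝ
  q2 : ℝ
  p1 : ℝ
  p2 : ℝ

/-- The G_NC group law on ℝ⁷. -/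
noncomputable def gmul (α β γ : ℝ) (a b : GNC) : GNC :=
  ⟨a.θ + b.θ + α / 2 * ((a.q1 * b.p1 + a.q2 * b.p2) - (a.p1 * b.q1 + a.p2 * b.q2)),
   a.φ + b.φ + β / 2 * (a.p1 * b.p2 - a.p2 * b.p1),
   a.ψ + b.ψ + γ / 2 * (a.q1 * b.q2 - a.q2 * b.q1),
   a.q1 + b.q1, a.q2 + b.q2, a.p1 + b.p1, a.p2 + b.p2⟩

/-- Membership in Z = {(θ,φ,ψ,0,0)}. -/
def inZ (g : GNC) : Prop := g.q1 = 0 ∧ g.q2 = 0 ∧ g.p1 = 0 ∧ g.p2 = 0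

/-- Z is contained in the center of G_NC, and when α ≠ 0, β ≠ 0, γ ≠ 0
it is exactly the center. -/
theorem gnc_center (α β γ : ℝ) :
    (∀ z : GNC, inZ z → ∀ g : GNC, gmul α β γ z g = gmul α β γ g z) ∧
    (α ≠ 0 → β ≠ 0 → γ ≠ 0 →
      ∀ z : GNC, (∀ g : GNC, gmul α β γ z g = gmul α β γ g z) → inZ z) := by
  constructor
  · rintro z ⟨h1, h2, h3, h4⟩ g
    ext <;> simp [gmul, h1, h2, h3, h4] <;> ring
  · intro hα hβ hγ z hz
    have h1 := congrArg GNC.θ (hz ⟨0,0,0,1,0,0,0⟩)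
    have h2 := congrArg GNC.θ (hz ⟨0,0,0,0,1,0,0⟩)
    have h3 := congrArg GNC.θ (hz ⟨0,0,0,0,0,1,0⟩)
    have h4 := congrArg GNC.θ (hz ⟨0,0,0,0,0,0,1⟩)
    simp [gmul] at h1 h2 h3 h4
    refine ⟨?_, ?_, ?_, ?_⟩
    · have e : α * z.q1 = 0 := by linarith
      exact (mul_eq_zero.mp e).resolve_left hα
    · have e : α * z.q2 = 0 := by linarith
      exact (mul_eq_zero.mp e).resolve_left hα
    · have e : α * z.p1 = 0 := by linarith
      exact (mul_eq_zero.mp e).resolve_left hα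
    · have e : α * z.p2 = 0 := by linarith
      exact (mul_eq_zero.mp e).resolve_left hα
end

section
/- For the gauge-parameter family of momentum operators, the commutator [P̂₁^{l,m}, P̂₂^{l,m}] acts as multiplication by −i·τγ/(ρ²α²), independently of l and m. -/
open Complex

section AuxCommutator

variable {g : ℝ × ℝ → ℂ} {r v : ℝ × ℝ}

lemma dA_cmul (c : ℂ) (hg : DifferentiableAt ℝ g r) (v : ℝ × ℝ) :
    fderiv ℝ (fun x => c * g x) r v = c * fderiv ℝ g r v := by
  rw [fderiv_const_mul hg c]; simp

lemma coord1_hasFDeriv (r : ℝ × ℝ) :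
    HasFDerivAt (fun x : ℝ × ℝ => (x.1 : ℂ))
      (Complex.ofRealCLM.comp (ContinuousLinearMap.fst ℝ ℝ ℝ)) r :=
  (Complex.ofRealCLM.comp (ContinuousLinearMap.fst ℝ ℝ ℝ)).hasFDerivAt

lemma coord2_hasFDeriv (r : ℝ × ℝ) :
    HasFDerivAt (fun x : ℝ × ℝ => (x.2 : ℂ))
      (Complex.ofRealCLM.comp (ContinuousLinearMap.snd ℝ ℝ ℝ)) r :=
  (Complex.ofRealCLM.comp (ContinuousLinearMap.snd ℝ ℝ ℝ)).hasFDerivAt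

lemma dA_coord1_mul (hg : DifferentiableAt ℝ g r) (v : ℝ × ℝ) :
    fderiv ℝ (fun x => (x.1 : ℂ) * g x) r v
      = (v.1 : ℂ) * g r + (r.1 : ℂ) * fderiv ℝ g r v := by
  rw [fderiv_fun_mul ((coord1_hasFDeriv r).differentiableAt) hg]
  simp [(coord1_hasFDeriv r).fderiv]
  ring

lemma dA_coord2_mul (hg : DifferentiableAt ℝ g r) (v : ℝ × ℝ) :
    fderiv ℝ (fun x => (x.2 : ℂ) * g x) r v
      = (v.2 : ℂ) * g r + (r.2 : ℂ) * fderiv ℝ g r v := by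
  rw [fderiv_fun_mul ((coord2_hasFDeriv r).differentiableAt) hg]
  simp [(coord2_hasFDeriv r).fderiv]
  ring

lemma dA_add {g h : ℝ × ℝ → ℂ} (hg : DifferentiableAt ℝ g r) (hh : DifferentiableAt ℝ h r)
    (v : ℝ × ℝ) :
    fderiv ℝ (fun x => g x + h x) r v = fderiv ℝ g r v + fderiv ℝ h r v := by
  rw [fderiv_fun_add hg hh]; simp

lemma dA_sub {g h : ℝ × ℝ → ℂ} (hg : DifferentiableAt ℝ g r) (hh : DifferentiableAt ℝ h r)
    (v : ℝ × ℝ) :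
    fderiv ℝ (fun x => g x - h x) r v = fderiv ℝ g r v - fderiv ℝ h r v := by
  rw [fderiv_fun_sub hg hh]; simp

lemma dA_dA {f : ℝ × ℝ → ℂ} (hf : ContDiff ℝ (⊤ : ℕ∞) f) (r v w : ℝ × ℝ) :
    fderiv ℝ (fun x => fderiv ℝ f x w) r v = fderiv ℝ (fun x => fderiv ℝ f x v) r w := by
  have hd : DifferentiableAt ℝ (fderiv ℝ f) r :=
    ((hf.fderiv_right (m := 1) (WithTop.coe_le_coe.mpr le_top)).differentiable one_ne_zero).differentiableAt
  have h1 : ∀ u u', fderiv ℝ (fun x => fderiv ℝ f x u) r u'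
      = fderiv ℝ (fderiv ℝ f) r u' u := by
    intro u u'
    rw [fderiv_clm_apply hd (differentiableAt_const u)]
    simp
  rw [h1, h1]
  exact (hf.contDiffAt.isSymmSndFDerivAt (by rw [minSmoothness_of_isRCLikeNormedField]; show ((2:ℕ∞) : WithTop ℕ∞) ≤ ((⊤ : ℕ∞) : WithTop ℕ∞); exact WithTop.coe_le_coe.mpr le_top)) v w

lemma diff_dA {f : ℝ × ℝ → ℂ} (hf : ContDiff ℝ (⊤ : ℕ∞) f) (w : ℝ × ℝ) :
    Differentiable ℝ (fun x => fderiv ℝ f x w) :=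
  ((hf.fderiv_right (m := 1) (WithTop.coe_le_coe.mpr le_top)).differentiable one_ne_zero).clm_apply (differentiable_const w)

lemma comm_key (A B C D : ℂ) (f : ℝ × ℝ → ℂ) (hf : ContDiff ℝ (⊤ : ℕ∞) f) (r : ℝ × ℝ) :
    (A * r.2 * (fun x => C * (x.1:ℂ) * f x + D * (fun y => fderiv ℝ f y (0,1)) x) r
      - B * fderiv ℝ (fun x => C * (x.1:ℂ) * f x + D * (fun y => fderiv ℝ f y (0,1)) x) r (1,0))
    - (C * r.1 * (fun x => A * (x.2:ℂ) * f x - B * (fun y => fderiv ℝ f y (1,0)) x) r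
      + D * fderiv ℝ (fun x => A * (x.2:ℂ) * f x - B * (fun y => fderiv ℝ f y (1,0)) x) r (0,1))
    = -(B*C + A*D) * f r := by
  have hfd : Differentiable ℝ f := hf.differentiable (by simp)
  have h1 := diff_dA hf (0,1)
  have h2 := diff_dA hf (1,0)
  have e1 : (fun x : ℝ×ℝ => C * (x.1:ℂ) * f x + D * (fun y => fderiv ℝ f y (0,1)) x)
      = fun x => (fun y => C * ((y.1:ℂ) * f y)) x + (fun y => D * (fun z => fderiv ℝ f z (0,1)) y) x := by
    funext x; ring
  have e2 : (fun x : ℝ×ℝ => A * (x.2:ℂ) * f x - B * (fun y => fderiv ℝ f y (1,0)) x)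
      = fun x => (fun y => A * ((y.2:ℂ) * f y)) x - (fun y => B * (fun z => fderiv ℝ f z (1,0)) y) x := by
    funext x; ring
  have d1x : DifferentiableAt ℝ (fun y : ℝ×ℝ => (y.1:ℂ) * f y) r :=
    ((coord1_hasFDeriv r).differentiableAt).mul (hfd r)
  have d2x : DifferentiableAt ℝ (fun y : ℝ×ℝ => (y.2:ℂ) * f y) r :=
    ((coord2_hasFDeriv r).differentiableAt).mul (hfd r)
  rw [e1, e2,
    dA_add ((d1x.const_mul C)) ((h1 r).const_mul D),
    dA_sub ((d2x.const_mul A)) ((h2 r).const_mul B),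
    dA_cmul C d1x, dA_cmul D (h1 r), dA_cmul A d2x, dA_cmul B (h2 r),
    dA_coord1_mul (hfd r), dA_coord2_mul (hfd r), dA_dA hf r (1,0) (0,1)]
  simp only []
  push_cast
  ring

end AuxCommutator

/-- Partial derivative in the first variable of f : ℝ² → ℂ. -/
noncomputable def d1 (f : ℝ × ℝ → ℂ) (r : ℝ × ℝ) : ℂ := fderiv ℝ f r (1, 0)

/-- Partial derivative in the second variable of f : ℝ² → ℂ. -/
noncomputable def d2 (f : ℝ × ℝ → ℂ) (r : ℝ × ℝ) : ℂ := fderiv ℝ f r (0, 1)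

/-- Q̂₁ᵐ f = r₁ f − m (iσβ/(ρ²α²)) ∂f/∂r₂. -/
noncomputable def Q1 (ρ σ α β m : ℝ) (f : ℝ × ℝ → ℂ) : ℝ × ℝ → ℂ := fun r =>
  (r.1 : ℂ) * f r - (m : ℂ) * (I * (σ : ℂ) * (β : ℂ) / ((ρ : ℂ) ^ 2 * (α : ℂ) ^ 2)) * d2 f r

/-- Q̂₂ᵐ f = r₂ f + (1−m) (iσβ/(ρ²α²)) ∂f/∂r₁. -/
noncomputable def Q2 (ρ σ α β m : ℝ) (f : ℝ × ℝ → ℂ) : ℝ × ℝ → ℂ := fun r =>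
  (r.2 : ℂ) * f r + ((1 : ℂ) - (m : ℂ)) * (I * (σ : ℂ) * (β : ℂ) / ((ρ : ℂ) ^ 2 * (α : ℂ) ^ 2)) * d1 f r

/-- P̂₁^{l,m} f = (τγρα(1−l)/(τγσβl−ρ²α²)) r₂ f
    − (i/(ρα))((τγσβ(l+m−lm)−ρ²α²)/(τγσβl−ρ²α²)) ∂f/∂r₁. -/
noncomputable def P1 (ρ σ τ α β γ l m : ℝ) (f : ℝ × ℝ → ℂ) : ℝ × ℝ → ℂ := fun r =>
  ((τ * γ * ρ * α * (1 - l) / (τ * γ * σ * β * l - ρ ^ 2 * α ^ 2) : ℝ) : ℂ) * (r.2 : ℂ) * f r -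
    (I / ((ρ : ℂ) * (α : ℂ))) *
      (((τ * γ * σ * β * (l + m - l * m) - ρ ^ 2 * α ^ 2) / (τ * γ * σ * β * l - ρ ^ 2 * α ^ 2) : ℝ) : ℂ) *
      d1 f r

/-- P̂₂^{l,m} f = (lτγ/(ρα)) r₁ f + i((τγσβl(1−m)−ρ²α²)/(ρ³α³)) ∂f/∂r₂. -/
noncomputable def P2 (ρ σ τ α β γ l m : ℝ) (f : ℝ × ℝ → ℂ) : ℝ × ℝ → ℂ := fun r =>
  ((l * τ * γ / (ρ * α) : ℝ) : ℂ) * (r.1 : ℂ) * f r +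
    I * (((τ * γ * σ * β * l * (1 - m) - ρ ^ 2 * α ^ 2) / (ρ ^ 3 * α ^ 3) : ℝ) : ℂ) * d2 f r

/-- [P̂₁^{l,m}, P̂₂^{l,m}] acts as multiplication by −iτγ/(ρ²α²),
independently of l and m. -/
theorem P_commutator (ρ σ τ α β γ l m : ℝ) (hρ : ρ ≠ 0) (hσ : σ ≠ 0) (hτ : τ ≠ 0)
    (hα : α ≠ 0) (hβ : β ≠ 0) (hγ : γ ≠ 0) (hc : ρ ^ 2 * α ^ 2 - σ * β * γ * τ ≠ 0)
    (hl : l ≠ ρ ^ 2 * α ^ 2 / (γ * β * σ * τ))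
    (f : ℝ × ℝ → ℂ) (hf : ContDiff ℝ (⊤ : ℕ∞) f) (hsupp : HasCompactSupport f) (r : ℝ × ℝ) :
    P1 ρ σ τ α β γ l m (P2 ρ σ τ α β γ l m f) r - P2 ρ σ τ α β γ l m (P1 ρ σ τ α β γ l m f) r =
      -(I * (τ : ℂ) * (γ : ℂ) / ((ρ : ℂ) ^ 2 * (α : ℂ) ^ 2)) * f r := by
  set A : ℂ := ((τ * γ * ρ * α * (1 - l) / (τ * γ * σ * β * l - ρ ^ 2 * α ^ 2) : ℝ) : ℂ) with hA
  set B : ℂ := (I / ((ρ : ℂ) * (α : ℂ))) *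
      (((τ * γ * σ * β * (l + m - l * m) - ρ ^ 2 * α ^ 2) / (τ * γ * σ * β * l - ρ ^ 2 * α ^ 2) : ℝ) : ℂ) with hB
  set C : ℂ := ((l * τ * γ / (ρ * α) : ℝ) : ℂ) with hC
  set D : ℂ := I * (((τ * γ * σ * β * l * (1 - m) - ρ ^ 2 * α ^ 2) / (ρ ^ 3 * α ^ 3) : ℝ) : ℂ) with hD
  have key : P1 ρ σ τ α β γ l m (P2 ρ σ τ α β γ l m f) r -
      P2 ρ σ τ α β γ l m (P1 ρ σ τ α β γ l m f) r = -(B*C + A*D) * f r := by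
    have := comm_key A B C D f hf r
    delta P1 P2 d1 d2
    simpa only [P1, P2, d1, d2] using this
  rw [key]
  have hK : τ * γ * σ * β * l - ρ ^ 2 * α ^ 2 ≠ 0 := by
    intro h
    apply hl
    rw [eq_div_iff (mul_ne_zero (mul_ne_zero (mul_ne_zero hγ hβ) hσ) hτ)]
    linear_combination h
  have hKc : ((τ : ℂ) * γ * σ * β * l - (ρ : ℂ) ^ 2 * (α : ℂ) ^ 2) ≠ 0 := by
    intro h
    apply hK
    exact_mod_cast h
  have hρc : (ρ : ℂ) ≠ 0 := ofReal_ne_zero.mpr hρ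
  have hαc : (α : ℂ) ≠ 0 := ofReal_ne_zero.mpr hα
  have hcoef : -(B*C + A*D) = -(I * (τ : ℂ) * (γ : ℂ) / ((ρ : ℂ) ^ 2 * (α : ℂ) ^ 2)) := by
    have hX : ((τ:ℂ)^2*γ^2*ρ^5*α^5*l^2*σ^2*β^2 - 2*τ*γ*ρ^7*α^7*l*σ*β + ρ^9*α^9) ≠ 0 := by
      have h := mul_ne_zero (mul_ne_zero (pow_ne_zero 5 hρc) (pow_ne_zero 5 hαc))
        (pow_ne_zero 2 hKc)
      intro h0
      apply h
      linear_combination h0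
    rw [hA, hB, hC, hD]
    push_cast
    have hY : (-((τ:ℂ)*γ*ρ^7*α^7*l*σ*β*2) + τ^2*γ^2*ρ^5*α^5*l^2*σ^2*β^2 + ρ^9*α^9) ≠ 0 := by
      intro h0; exact hX (by linear_combination h0)
    field_simp [hρc, hαc, hKc, hX]
    ring
  rw [hcoef]
end

section
/- The mixed commutators satisfy [Q̂₁ᵐ, P̂₁^{l,m}] = [Q̂₂ᵐ, P̂₂^{l,m}] = (i/(ρα))·Id and [Q̂₁ᵐ, P̂₂^{l,m}] = [Q̂₂ᵐ, P̂₁^{l,m}] = 0, for all admissible gauge parameters l, m. -/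
open Complex

private lemma diff_x : Differentiable ℝ (fun p : ℝ × ℝ => (p.1 : ℂ)) :=
  (Complex.ofRealCLM.comp (ContinuousLinearMap.fst ℝ ℝ ℝ)).differentiable

private lemma diff_y : Differentiable ℝ (fun p : ℝ × ℝ => (p.2 : ℂ)) :=
  (Complex.ofRealCLM.comp (ContinuousLinearMap.snd ℝ ℝ ℝ)).differentiable

private lemma fderiv_x (r v : ℝ × ℝ) :
    fderiv ℝ (fun p : ℝ × ℝ => (p.1 : ℂ)) r v = (v.1 : ℂ) := by
  have h : fderiv ℝ (fun p : ℝ × ℝ => (p.1 : ℂ)) r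
      = (Complex.ofRealCLM.comp (ContinuousLinearMap.fst ℝ ℝ ℝ)) :=
    (Complex.ofRealCLM.comp (ContinuousLinearMap.fst ℝ ℝ ℝ)).fderiv
  rw [h]; rfl

private lemma fderiv_y (r v : ℝ × ℝ) :
    fderiv ℝ (fun p : ℝ × ℝ => (p.2 : ℂ)) r v = (v.2 : ℂ) := by
  have h : fderiv ℝ (fun p : ℝ × ℝ => (p.2 : ℂ)) r
      = (Complex.ofRealCLM.comp (ContinuousLinearMap.snd ℝ ℝ ℝ)) :=
    (Complex.ofRealCLM.comp (ContinuousLinearMap.snd ℝ ℝ ℝ)).fderiv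
  rw [h]; rfl

private lemma fderiv_xmul (f : ℝ × ℝ → ℂ) (hf : ContDiff ℝ (⊤ : ℕ∞) f) (r v : ℝ × ℝ) :
    fderiv ℝ (fun p => (p.1 : ℂ) * f p) r v = (v.1 : ℂ) * f r + (r.1 : ℂ) * fderiv ℝ f r v := by
  rw [fderiv_fun_mul (diff_x r) (hf.differentiable (by simp) r)]
  simp [fderiv_x]; ring

private lemma fderiv_ymul (f : ℝ × ℝ → ℂ) (hf : ContDiff ℝ (⊤ : ℕ∞) f) (r v : ℝ × ℝ) :
    fderiv ℝ (fun p => (p.2 : ℂ) * f p) r v = (v.2 : ℂ) * f r + (r.2 : ℂ) * fderiv ℝ f r v := by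
  rw [fderiv_fun_mul (diff_y r) (hf.differentiable (by simp) r)]
  simp [fderiv_y]; ring

private lemma smooth_d (f : ℝ × ℝ → ℂ) (hf : ContDiff ℝ (⊤ : ℕ∞) f) (w : ℝ × ℝ) :
    ContDiff ℝ (⊤ : ℕ∞) (fun p => fderiv ℝ f p w) :=
  (hf.fderiv_right (by simp)).clm_apply contDiff_const

private lemma fderiv_dd (f : ℝ × ℝ → ℂ) (hf : ContDiff ℝ (⊤ : ℕ∞) f) (r v w : ℝ × ℝ) :
    fderiv ℝ (fun p => fderiv ℝ f p w) r v = fderiv ℝ (fderiv ℝ f) r v w := by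
  have h : HasFDerivAt (fun p => (ContinuousLinearMap.apply ℝ ℂ w) (fderiv ℝ f p))
      ((ContinuousLinearMap.apply ℝ ℂ w).comp (fderiv ℝ (fderiv ℝ f) r)) r :=
    (ContinuousLinearMap.apply ℝ ℂ w).hasFDerivAt.comp r
      (((hf.fderiv_right (m := (⊤ : ℕ∞)) (by simp)).differentiable (by simp)) r).hasFDerivAt
  have h2 := h.fderiv
  calc fderiv ℝ (fun p => fderiv ℝ f p w) r v
      = ((ContinuousLinearMap.apply ℝ ℂ w).comp (fderiv ℝ (fderiv ℝ f) r)) v := by rw [← h2]; rfl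
    _ = fderiv ℝ (fderiv ℝ f) r v w := rfl

private lemma sym (f : ℝ × ℝ → ℂ) (hf : ContDiff ℝ (⊤ : ℕ∞) f) (r : ℝ × ℝ) :
    fderiv ℝ (fderiv ℝ f) r (1,0) (0,1) = fderiv ℝ (fderiv ℝ f) r (0,1) (1,0) :=
  (hf.contDiffAt.isSymmSndFDerivAt (by rw [minSmoothness_of_isRCLikeNormedField]; exact WithTop.coe_le_coe.mpr le_top)).eq _ _

private lemma dQ1 (ρ σ α β m : ℝ) (f : ℝ × ℝ → ℂ) (hf : ContDiff ℝ (⊤ : ℕ∞) f) (r v : ℝ × ℝ) :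
    fderiv ℝ (Q1 ρ σ α β m f) r v =
      ((v.1 : ℂ) * f r + (r.1 : ℂ) * fderiv ℝ f r v)
        - (m : ℂ) * (I * (σ : ℂ) * (β : ℂ) / ((ρ : ℂ) ^ 2 * (α : ℂ) ^ 2)) *
          fderiv ℝ (fderiv ℝ f) r v (0,1) := by
  have hg : DifferentiableAt ℝ (fun p => fderiv ℝ f p (0,1)) r :=
    (smooth_d f hf (0,1)).differentiable (by simp) r
  have h1 : DifferentiableAt ℝ (fun p => (p.1 : ℂ) * f p) r :=
    (diff_x r).mul (hf.differentiable (by simp) r)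
  have h2 : DifferentiableAt ℝ (fun p =>
      (m : ℂ) * (I * (σ : ℂ) * (β : ℂ) / ((ρ : ℂ) ^ 2 * (α : ℂ) ^ 2)) * fderiv ℝ f p (0,1)) r :=
    hg.const_mul _
  have h : Q1 ρ σ α β m f = fun p =>
      (p.1 : ℂ) * f p - (m : ℂ) * (I * (σ : ℂ) * (β : ℂ) / ((ρ : ℂ) ^ 2 * (α : ℂ) ^ 2)) *
        fderiv ℝ f p (0,1) := rfl
  rw [h, fderiv_fun_sub h1 h2, ContinuousLinearMap.sub_apply, fderiv_xmul f hf,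
    fderiv_const_mul hg, ContinuousLinearMap.smul_apply, fderiv_dd f hf, smul_eq_mul]

private lemma dQ2 (ρ σ α β m : ℝ) (f : ℝ × ℝ → ℂ) (hf : ContDiff ℝ (⊤ : ℕ∞) f) (r v : ℝ × ℝ) :
    fderiv ℝ (Q2 ρ σ α β m f) r v =
      ((v.2 : ℂ) * f r + (r.2 : ℂ) * fderiv ℝ f r v)
        + ((1:ℂ) - (m : ℂ)) * (I * (σ : ℂ) * (β : ℂ) / ((ρ : ℂ) ^ 2 * (α : ℂ) ^ 2)) *
          fderiv ℝ (fderiv ℝ f) r v (1,0) := by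
  have hg : DifferentiableAt ℝ (fun p => fderiv ℝ f p (1,0)) r :=
    (smooth_d f hf (1,0)).differentiable (by simp) r
  have h1 : DifferentiableAt ℝ (fun p => (p.2 : ℂ) * f p) r :=
    (diff_y r).mul (hf.differentiable (by simp) r)
  have h2 : DifferentiableAt ℝ (fun p =>
      ((1:ℂ) - (m : ℂ)) * (I * (σ : ℂ) * (β : ℂ) / ((ρ : ℂ) ^ 2 * (α : ℂ) ^ 2)) * fderiv ℝ f p (1,0)) r :=
    hg.const_mul _
  have h : Q2 ρ σ α β m f = fun p =>
      (p.2 : ℂ) * f p + ((1:ℂ) - (m : ℂ)) * (I * (σ : ℂ) * (β : ℂ) / ((ρ : ℂ) ^ 2 * (α : ℂ) ^ 2)) *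
        fderiv ℝ f p (1,0) := rfl
  rw [h, fderiv_fun_add h1 h2, ContinuousLinearMap.add_apply, fderiv_ymul f hf,
    fderiv_const_mul hg, ContinuousLinearMap.smul_apply, fderiv_dd f hf, smul_eq_mul]

private lemma dP1 (ρ σ τ α β γ l m : ℝ) (f : ℝ × ℝ → ℂ) (hf : ContDiff ℝ (⊤ : ℕ∞) f) (r v : ℝ × ℝ) :
    fderiv ℝ (P1 ρ σ τ α β γ l m f) r v =
      ((τ * γ * ρ * α * (1 - l) / (τ * γ * σ * β * l - ρ ^ 2 * α ^ 2) : ℝ) : ℂ) *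
        ((v.2 : ℂ) * f r + (r.2 : ℂ) * fderiv ℝ f r v)
      - (I / ((ρ : ℂ) * (α : ℂ))) *
        (((τ * γ * σ * β * (l + m - l * m) - ρ ^ 2 * α ^ 2) / (τ * γ * σ * β * l - ρ ^ 2 * α ^ 2) : ℝ) : ℂ) *
        fderiv ℝ (fderiv ℝ f) r v (1,0) := by
  have hg : DifferentiableAt ℝ (fun p => fderiv ℝ f p (1,0)) r :=
    (smooth_d f hf (1,0)).differentiable (by simp) r
  have hyf : DifferentiableAt ℝ (fun p => (p.2 : ℂ) * f p) r :=
    (diff_y r).mul (hf.differentiable (by simp) r)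
  have h1 : DifferentiableAt ℝ (fun p =>
      ((τ * γ * ρ * α * (1 - l) / (τ * γ * σ * β * l - ρ ^ 2 * α ^ 2) : ℝ) : ℂ) *
        ((p.2 : ℂ) * f p)) r := hyf.const_mul _
  have h2 : DifferentiableAt ℝ (fun p =>
      ((I / ((ρ : ℂ) * (α : ℂ))) *
        (((τ * γ * σ * β * (l + m - l * m) - ρ ^ 2 * α ^ 2) / (τ * γ * σ * β * l - ρ ^ 2 * α ^ 2) : ℝ) : ℂ)) *
        fderiv ℝ f p (1,0)) r := hg.const_mul _
  have h : P1 ρ σ τ α β γ l m f = fun p =>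
      ((τ * γ * ρ * α * (1 - l) / (τ * γ * σ * β * l - ρ ^ 2 * α ^ 2) : ℝ) : ℂ) *
        ((p.2 : ℂ) * f p) -
      ((I / ((ρ : ℂ) * (α : ℂ))) *
        (((τ * γ * σ * β * (l + m - l * m) - ρ ^ 2 * α ^ 2) / (τ * γ * σ * β * l - ρ ^ 2 * α ^ 2) : ℝ) : ℂ)) *
        fderiv ℝ f p (1,0) := by
    funext p; simp only [P1, d1]; ring
  rw [h, fderiv_fun_sub h1 h2, ContinuousLinearMap.sub_apply,
    fderiv_const_mul hyf, fderiv_const_mul hg, ContinuousLinearMap.smul_apply,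
    ContinuousLinearMap.smul_apply, fderiv_ymul f hf, fderiv_dd f hf, smul_eq_mul, smul_eq_mul]

private lemma dP2 (ρ σ τ α β γ l m : ℝ) (f : ℝ × ℝ → ℂ) (hf : ContDiff ℝ (⊤ : ℕ∞) f) (r v : ℝ × ℝ) :
    fderiv ℝ (P2 ρ σ τ α β γ l m f) r v =
      ((l * τ * γ / (ρ * α) : ℝ) : ℂ) * ((v.1 : ℂ) * f r + (r.1 : ℂ) * fderiv ℝ f r v)
      + I * (((τ * γ * σ * β * l * (1 - m) - ρ ^ 2 * α ^ 2) / (ρ ^ 3 * α ^ 3) : ℝ) : ℂ) *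
        fderiv ℝ (fderiv ℝ f) r v (0,1) := by
  have hg : DifferentiableAt ℝ (fun p => fderiv ℝ f p (0,1)) r :=
    (smooth_d f hf (0,1)).differentiable (by simp) r
  have hxf : DifferentiableAt ℝ (fun p => (p.1 : ℂ) * f p) r :=
    (diff_x r).mul (hf.differentiable (by simp) r)
  have h1 : DifferentiableAt ℝ (fun p =>
      ((l * τ * γ / (ρ * α) : ℝ) : ℂ) * ((p.1 : ℂ) * f p)) r := hxf.const_mul _
  have h2 : DifferentiableAt ℝ (fun p =>
      (I * (((τ * γ * σ * β * l * (1 - m) - ρ ^ 2 * α ^ 2) / (ρ ^ 3 * α ^ 3) : ℝ) : ℂ)) *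
        fderiv ℝ f p (0,1)) r := hg.const_mul _
  have h : P2 ρ σ τ α β γ l m f = fun p =>
      ((l * τ * γ / (ρ * α) : ℝ) : ℂ) * ((p.1 : ℂ) * f p) +
      (I * (((τ * γ * σ * β * l * (1 - m) - ρ ^ 2 * α ^ 2) / (ρ ^ 3 * α ^ 3) : ℝ) : ℂ)) *
        fderiv ℝ f p (0,1) := by
    funext p; simp only [P2, d2]; ring
  rw [h, fderiv_fun_add h1 h2, ContinuousLinearMap.add_apply,
    fderiv_const_mul hxf, fderiv_const_mul hg, ContinuousLinearMap.smul_apply,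
    ContinuousLinearMap.smul_apply, fderiv_xmul f hf, fderiv_dd f hf, smul_eq_mul, smul_eq_mul]


set_option maxHeartbeats 1000000 in
/-- the mixed commutators satisfy [Q̂₁ᵐ,P̂₁^{l,m}] = [Q̂₂ᵐ,P̂₂^{l,m}] = (i/(ρα))·Id
and [Q̂₁ᵐ,P̂₂^{l,m}] = [Q̂₂ᵐ,P̂₁^{l,m}] = 0, for all admissible gauge parameters l, m. -/
theorem QP_commutators (ρ σ τ α β γ l m : ℝ) (hρ : ρ ≠ 0) (hσ : σ ≠ 0) (hτ : τ ≠ 0)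
    (hα : α ≠ 0) (hβ : β ≠ 0) (hγ : γ ≠ 0) (hc : ρ ^ 2 * α ^ 2 - σ * β * γ * τ ≠ 0)
    (hD : τ * γ * σ * β * l - ρ ^ 2 * α ^ 2 ≠ 0)
    (f : ℝ × ℝ → ℂ) (hf : ContDiff ℝ (⊤ : ℕ∞) f) (hsupp : HasCompactSupport f) (r : ℝ × ℝ) :
    (Q1 ρ σ α β m (P1 ρ σ τ α β γ l m f) r - P1 ρ σ τ α β γ l m (Q1 ρ σ α β m f) r =
        I / ((ρ : ℂ) * (α : ℂ)) * f r) ∧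
    (Q2 ρ σ α β m (P2 ρ σ τ α β γ l m f) r - P2 ρ σ τ α β γ l m (Q2 ρ σ α β m f) r =
        I / ((ρ : ℂ) * (α : ℂ)) * f r) ∧
    (Q1 ρ σ α β m (P2 ρ σ τ α β γ l m f) r - P2 ρ σ τ α β γ l m (Q1 ρ σ α β m f) r = 0) ∧
    (Q2 ρ σ α β m (P1 ρ σ τ α β γ l m f) r - P1 ρ σ τ α β γ l m (Q2 ρ σ α β m f) r = 0) := by
  have hρ' : (ρ : ℂ) ≠ 0 := by exact_mod_cast hρ
  have hα' : (α : ℂ) ≠ 0 := by exact_mod_cast hα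
  have hD' : (τ:ℂ) * γ * σ * β * l - (ρ:ℂ) ^ 2 * (α:ℂ) ^ 2 ≠ 0 := by
    have : ((τ * γ * σ * β * l - ρ ^ 2 * α ^ 2 : ℝ) : ℂ) ≠ 0 := by exact_mod_cast hD
    push_cast at this; exact this
  refine ⟨?_, ?_, ?_, ?_⟩
  · have e1 : Q1 ρ σ α β m (P1 ρ σ τ α β γ l m f) r
        = (r.1:ℂ) * P1 ρ σ τ α β γ l m f r
          - (m : ℂ) * (I * (σ : ℂ) * (β : ℂ) / ((ρ : ℂ) ^ 2 * (α : ℂ) ^ 2)) *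
            fderiv ℝ (P1 ρ σ τ α β γ l m f) r (0,1) := rfl
    have e2 : P1 ρ σ τ α β γ l m (Q1 ρ σ α β m f) r
        = ((τ * γ * ρ * α * (1 - l) / (τ * γ * σ * β * l - ρ ^ 2 * α ^ 2) : ℝ) : ℂ) * (r.2 : ℂ) *
            Q1 ρ σ α β m f r
          - (I / ((ρ : ℂ) * (α : ℂ))) *
            (((τ * γ * σ * β * (l + m - l * m) - ρ ^ 2 * α ^ 2) / (τ * γ * σ * β * l - ρ ^ 2 * α ^ 2) : ℝ) : ℂ) *
            fderiv ℝ (Q1 ρ σ α β m f) r (1,0) := rfl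
    rw [e1, e2, dP1 ρ σ τ α β γ l m f hf r (0,1), dQ1 ρ σ α β m f hf r (1,0)]
    simp only [Q1, P1, d1, d2]
    rw [sym f hf r]
    have eρ : (ρ:ℂ) * (ρ:ℂ)⁻¹ = 1 := mul_inv_cancel₀ hρ'
    have eα : (α:ℂ) * (α:ℂ)⁻¹ = 1 := mul_inv_cancel₀ hα'
    have eD : ((τ:ℂ) * γ * σ * β * l - (ρ:ℂ) ^ 2 * (α:ℂ) ^ 2) *
        ((τ:ℂ) * γ * σ * β * l - (ρ:ℂ) ^ 2 * (α:ℂ) ^ 2)⁻¹ = 1 := mul_inv_cancel₀ hD'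
    have key : I / ((ρ:ℂ) * (α:ℂ)) *
          ((((τ:ℂ) * γ * σ * β * ((l:ℂ) + m - l * m) - (ρ:ℂ)^2 * (α:ℂ)^2) /
            ((τ:ℂ) * γ * σ * β * l - (ρ:ℂ)^2 * (α:ℂ)^2))) -
        (m:ℂ) * (I * (σ:ℂ) * (β:ℂ) / ((ρ:ℂ)^2 * (α:ℂ)^2)) *
          ((τ:ℂ) * γ * ρ * α * (1 - (l:ℂ)) / ((τ:ℂ) * γ * σ * β * l - (ρ:ℂ)^2 * (α:ℂ)^2)) =
        I / ((ρ:ℂ) * (α:ℂ)) := by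
      linear_combination (I * ((ρ:ℂ))⁻¹ * ((α:ℂ))⁻¹) * eD -
        (I * (m:ℂ) * σ * β * τ * γ * (1 - (l:ℂ)) * ((ρ:ℂ))⁻¹ * ((α:ℂ))⁻¹ *
          ((τ:ℂ) * γ * σ * β * l - (ρ:ℂ)^2 * (α:ℂ)^2)⁻¹) * eρ -
        (I * (m:ℂ) * σ * β * τ * γ * (1 - (l:ℂ)) * ρ * (((ρ:ℂ))⁻¹)^2 * ((α:ℂ))⁻¹ *
          ((τ:ℂ) * γ * σ * β * l - (ρ:ℂ)^2 * (α:ℂ)^2)⁻¹) * eα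
    push_cast
    norm_num
    linear_combination (f r) * key
  · have e1 : Q2 ρ σ α β m (P2 ρ σ τ α β γ l m f) r
        = (r.2:ℂ) * P2 ρ σ τ α β γ l m f r
          + ((1:ℂ) - (m : ℂ)) * (I * (σ : ℂ) * (β : ℂ) / ((ρ : ℂ) ^ 2 * (α : ℂ) ^ 2)) *
            fderiv ℝ (P2 ρ σ τ α β γ l m f) r (1,0) := rfl
    have e2 : P2 ρ σ τ α β γ l m (Q2 ρ σ α β m f) r
        = ((l * τ * γ / (ρ * α) : ℝ) : ℂ) * (r.1 : ℂ) * Q2 ρ σ α β m f r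
          + I * (((τ * γ * σ * β * l * (1 - m) - ρ ^ 2 * α ^ 2) / (ρ ^ 3 * α ^ 3) : ℝ) : ℂ) *
            fderiv ℝ (Q2 ρ σ α β m f) r (0,1) := rfl
    rw [e1, e2, dP2 ρ σ τ α β γ l m f hf r (1,0), dQ2 ρ σ α β m f hf r (0,1)]
    simp only [Q2, P2, d1, d2]
    rw [sym f hf r]
    have eρ : (ρ:ℂ) * (ρ:ℂ)⁻¹ = 1 := mul_inv_cancel₀ hρ'
    have eα : (α:ℂ) * (α:ℂ)⁻¹ = 1 := mul_inv_cancel₀ hα'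
    have key : ((1:ℂ) - (m:ℂ)) * (I * (σ:ℂ) * (β:ℂ) / ((ρ:ℂ)^2 * (α:ℂ)^2)) *
          ((l:ℂ) * τ * γ / ((ρ:ℂ) * α)) -
        I * (((τ:ℂ) * γ * σ * β * l * (1 - (m:ℂ)) - (ρ:ℂ)^2 * (α:ℂ)^2) / ((ρ:ℂ)^3 * (α:ℂ)^3)) =
        I / ((ρ:ℂ) * (α:ℂ)) := by
      linear_combination (I * ((ρ:ℂ))⁻¹ * ((α:ℂ))⁻¹ * ((α:ℂ) * (α:ℂ)⁻¹)^2 * ((ρ:ℂ) * (ρ:ℂ)⁻¹ + 1)) * eρ +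
        (I * ((ρ:ℂ))⁻¹ * ((α:ℂ))⁻¹ * ((α:ℂ) * (α:ℂ)⁻¹ + 1)) * eα
    push_cast
    norm_num
    linear_combination (f r) * key
  · have e1 : Q1 ρ σ α β m (P2 ρ σ τ α β γ l m f) r
        = (r.1:ℂ) * P2 ρ σ τ α β γ l m f r
          - (m : ℂ) * (I * (σ : ℂ) * (β : ℂ) / ((ρ : ℂ) ^ 2 * (α : ℂ) ^ 2)) *
            fderiv ℝ (P2 ρ σ τ α β γ l m f) r (0,1) := rfl
    have e2 : P2 ρ σ τ α β γ l m (Q1 ρ σ α β m f) r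
        = ((l * τ * γ / (ρ * α) : ℝ) : ℂ) * (r.1 : ℂ) * Q1 ρ σ α β m f r
          + I * (((τ * γ * σ * β * l * (1 - m) - ρ ^ 2 * α ^ 2) / (ρ ^ 3 * α ^ 3) : ℝ) : ℂ) *
            fderiv ℝ (Q1 ρ σ α β m f) r (0,1) := rfl
    rw [e1, e2, dP2 ρ σ τ α β γ l m f hf r (0,1), dQ1 ρ σ α β m f hf r (0,1)]
    simp only [Q1, P2, d1, d2]
    push_cast
    norm_num
    ring
  · have e1 : Q2 ρ σ α β m (P1 ρ σ τ α β γ l m f) r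
        = (r.2:ℂ) * P1 ρ σ τ α β γ l m f r
          + ((1:ℂ) - (m : ℂ)) * (I * (σ : ℂ) * (β : ℂ) / ((ρ : ℂ) ^ 2 * (α : ℂ) ^ 2)) *
            fderiv ℝ (P1 ρ σ τ α β γ l m f) r (1,0) := rfl
    have e2 : P1 ρ σ τ α β γ l m (Q2 ρ σ α β m f) r
        = ((τ * γ * ρ * α * (1 - l) / (τ * γ * σ * β * l - ρ ^ 2 * α ^ 2) : ℝ) : ℂ) * (r.2 : ℂ) *
            Q2 ρ σ α β m f r
          - (I / ((ρ : ℂ) * (α : ℂ))) *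
            (((τ * γ * σ * β * (l + m - l * m) - ρ ^ 2 * α ^ 2) / (τ * γ * σ * β * l - ρ ^ 2 * α ^ 2) : ℝ) : ℂ) *
            fderiv ℝ (Q2 ρ σ α β m f) r (1,0) := rfl
    rw [e1, e2, dP1 ρ σ τ α β γ l m f hf r (1,0), dQ2 ρ σ α β m f hf r (1,0)]
    simp only [Q2, P1, d1, d2]
    push_cast
    norm_num
    ring
end
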